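/- arXiv:1806.00063 — 8 statements merged into one kernel-verified Lean document; each statement's English description precedes it below -/
import Mathlib

section
/- Let f : ℝ → ℝ be convex with f(1) = 0. Define g(q) = q·f(1/q) + (1−q)·f(0) for q ∈ (0,1]. Then g is non-increasing on (0,1]. -/
theorem g_antitone (f : ℝ → ℝ) (hf : ConvexOn ℝ (Set.Ici 0) f) (hf1 : f 1 = 0) :
    AntitoneOn (fun q : ℝ => q * f (1 / q) + (1 - q) * f 0) (Set.Ioc (0 : ℝ) 1) := by
  rintro a ⟨ha0, ha1⟩ b ⟨hb0, hb1⟩ hab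
  rcases eq_or_lt_of_le hab with rfl | hlt
  · exact le_refl _
  have ha1' : a < 1 := lt_of_lt_of_le hlt hb1
  have h1a : (0:ℝ) < 1 - a := by linarith
  have h1b : (0:ℝ) ≤ 1 - b := by linarith
  set t : ℝ := a * (1 - b) / (b * (1 - a)) with ht_def
  have ht0 : 0 ≤ t := by positivity
  have ht1 : t ≤ 1 := by
    rw [ht_def, div_le_one (by positivity)]
    nlinarith
  have hx : (1/a : ℝ) ∈ Set.Ici (0:ℝ) := by
    simp only [Set.mem_Ici]; positivity
  have hy : (1:ℝ) ∈ Set.Ici (0:ℝ) := by norm_num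
  have h0 : (0:ℝ) ∈ Set.Ici (0:ℝ) := by norm_num
  have hcomb : t • (1/a) + (1 - t) • (1:ℝ) = 1/b := by
    rw [ht_def]
    have := ha0.ne'; have := hb0.ne'; have := h1a.ne'
    simp only [smul_eq_mul]
    field_simp
    ring
  have h1 := hf.2 hx hy ht0 (by linarith : 0 ≤ 1 - t) (by ring : t + (1 - t) = 1)
  rw [hcomb, hf1] at h1
  simp only [smul_eq_mul] at h1
  have h1' : f (1/b) ≤ t * f (1/a) := by linarith [h1]
  have hcomb2 : (1 - a) • (0:ℝ) + a • (1/a) = 1 := by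
    rw [smul_eq_mul, smul_eq_mul, mul_zero, zero_add, mul_one_div_cancel ha0.ne']
  have h2 := hf.2 h0 hx (by linarith : (0:ℝ) ≤ 1 - a) (le_of_lt ha0)
    (by ring : (1 - a) + a = 1)
  rw [hcomb2, hf1] at h2
  simp only [smul_eq_mul] at h2
  have h2' : 0 ≤ (1 - a) * f 0 + a * f (1/a) := by linarith [h2]
  -- clear the denominator in h1'
  have h1'' : (1 - a) * b * f (1/b) ≤ a * (1 - b) * f (1/a) := by
    have hbt : b * (1 - a) * t = a * (1 - b) := by
      rw [ht_def]; field_simp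
    have hh := mul_le_mul_of_nonneg_left h1' (by positivity : (0:ℝ) ≤ b * (1 - a))
    have he : b * (1 - a) * (t * f (1/a)) = a * (1 - b) * f (1/a) := by
      rw [← mul_assoc, hbt]
    linarith [hh, he.le, he.ge]
  simp only
  nlinarith [mul_nonneg (by linarith : (0:ℝ) ≤ b - a) h2']
end

section
/- Let P and Q be probability mass functions on a finite set 𝒴 and let B ⊆ 𝒴 with P(B) = 1 and Q(B) > 0. Let f : ℝ → ℝ be convex with f(1) = 0. Then the f-divergence D_f(P‖Q) = Σ_{y∈𝒴} Q(y) f(P(y)/Q(y)) (with the convention 0·f(p/0) handled by continuity and terms with Q(y)=0, P(y)=0 contributing 0) satisfies D_f(P‖Q) ≥ Q(B)·f(1/Q(B)) + (1 − Q(B))·f(0). -/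
theorem fdiv_lower_bound {𝒴 : Type*} [Fintype 𝒴]
    (P Q : 𝒴 → ℝ) (hP0 : ∀ y, 0 ≤ P y) (hQ0 : ∀ y, 0 < Q y)
    (hP1 : ∑ y, P y = 1) (hQ1 : ∑ y, Q y = 1)
    (B : Finset 𝒴) (hPB : ∑ y ∈ B, P y = 1) (hQB : 0 < ∑ y ∈ B, Q y)
    (f : ℝ → ℝ) (hf : ConvexOn ℝ (Set.Ici 0) f) (hf1 : f 1 = 0) :
    ∑ y, Q y * f (P y / Q y) ≥
      (∑ y ∈ B, Q y) * f (1 / ∑ y ∈ B, Q y) + (1 - ∑ y ∈ B, Q y) * f 0 := by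
  classical
  set s := ∑ y ∈ B, Q y with hs
  have hPc : ∀ y ∈ Bᶜ, P y = 0 := by
    have hsum : ∑ y ∈ Bᶜ, P y = 0 := by
      have := Finset.sum_add_sum_compl B P
      rw [hP1, hPB] at this; linarith
    exact fun y hy => (Finset.sum_eq_zero_iff_of_nonneg (fun y _ => hP0 y)).mp hsum y hy
  have hsplit : ∑ y, Q y * f (P y / Q y)
      = ∑ y ∈ B, Q y * f (P y / Q y) + ∑ y ∈ Bᶜ, Q y * f (P y / Q y) :=
    (Finset.sum_add_sum_compl B _).symm
  have hcompl : ∑ y ∈ Bᶜ, Q y * f (P y / Q y) = (1 - s) * f 0 := by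
    have h1 : ∑ y ∈ Bᶜ, Q y * f (P y / Q y) = ∑ y ∈ Bᶜ, Q y * f 0 := by
      apply Finset.sum_congr rfl
      intro y hy
      rw [hPc y hy, zero_div]
    rw [h1, ← Finset.sum_mul]
    have : ∑ y ∈ Bᶜ, Q y = 1 - s := by
      have := Finset.sum_add_sum_compl B Q
      rw [hQ1] at this; linarith
    rw [this]
  have hB : s * f (1 / s) ≤ ∑ y ∈ B, Q y * f (P y / Q y) := by
    have key := hf.map_sum_le (t := B) (w := fun y => Q y / s) (p := fun y => P y / Q y)
      (fun y _ => div_nonneg (hQ0 y).le hQB.le)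
      (by rw [← Finset.sum_div, ← hs, div_self hQB.ne'])
      (fun y _ => div_nonneg (hP0 y) (hQ0 y).le)
    have hx : ∑ y ∈ B, (Q y / s) • (P y / Q y) = 1 / s := by
      rw [← hPB, Finset.sum_div]
      apply Finset.sum_congr rfl
      intro y _
      have h1 := (hQ0 y).ne'
      have h2 := hQB.ne'
      field_simp
      ring_nf
      field_simp
    rw [hx] at key
    calc s * f (1 / s) ≤ s * ∑ y ∈ B, (Q y / s) * f (P y / Q y) := by
          exact mul_le_mul_of_nonneg_left key hQB.le
      _ = ∑ y ∈ B, Q y * f (P y / Q y) := by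
          rw [Finset.mul_sum]
          apply Finset.sum_congr rfl
          intro y _
          field_simp
  rw [hsplit, hcompl]
  linarith
end

section
/- Let Q be a probability mass function on a finite set 𝒴 with Q(y) > 0 for all y, let B ⊆ 𝒴 be nonempty, and let f : [0,∞) → ℝ be convex with f(1) = 0. Define P(y) = Q(y)·1[y∈B]/Q(B). Then P is a probability mass function supported on B and D_f(P‖Q) = Q(B)·f(1/Q(B)) + (1 − Q(B))·f(0). In particular the lower bound Q(B)·f(1/Q(B)) + (1−Q(B))·f(0) on D_f over all P supported on B is achieved. -/
theorem fdiv_lower_bound_achieved {𝒴 : Type*} [Fintype 𝒴] [DecidableEq 𝒴]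
    (Q : 𝒴 → ℝ) (hQ0 : ∀ y, 0 < Q y) (hQ1 : ∑ y, Q y = 1)
    (B : Finset 𝒴) (hB : B.Nonempty)
    (f : ℝ → ℝ) (hf : ConvexOn ℝ (Set.Ici 0) f) (hf1 : f 1 = 0)
    (P : 𝒴 → ℝ) (hPdef : ∀ y, P y = (if y ∈ B then Q y else 0) / ∑ y ∈ B, Q y) :
    (∀ y, 0 ≤ P y) ∧ (∑ y, P y = 1) ∧ (∑ y ∈ B, P y = 1) ∧
    ∑ y, Q y * f (P y / Q y) =
      (∑ y ∈ B, Q y) * f (1 / ∑ y ∈ B, Q y) + (1 - ∑ y ∈ B, Q y) * f 0 := by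
  have hQBpos : 0 < ∑ y ∈ B, Q y :=
    Finset.sum_pos (fun y _ => hQ0 y) hB
  have hQBne : (∑ y ∈ B, Q y) ≠ 0 := ne_of_gt hQBpos
  have hsumB : ∑ y ∈ B, P y = 1 := by
    simp only [hPdef]
    rw [← Finset.sum_div]
    rw [Finset.sum_congr rfl (fun y hy => if_pos hy)]
    exact div_self hQBne
  refine ⟨?_, ?_, hsumB, ?_⟩
  · intro y
    rw [hPdef]
    apply div_nonneg _ hQBpos.le
    split
    · exact (hQ0 y).le
    · exact le_refl 0
  · rw [← Finset.sum_subset (Finset.subset_univ B) (fun y _ hy => by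
      rw [hPdef, if_neg hy, zero_div])]
    exact hsumB
  · have key : ∀ y : 𝒴, Q y * f (P y / Q y) =
        (if y ∈ B then Q y * f (1 / ∑ y ∈ B, Q y) else Q y * f 0) := by
      intro y
      rw [hPdef]
      split
      · rw [div_div, mul_comm (∑ y ∈ B, Q y) (Q y), ← div_div,
          div_self (ne_of_gt (hQ0 y)), one_div]
      · simp
    rw [Finset.sum_congr rfl (fun y _ => key y), Finset.sum_ite,
      ← Finset.sum_mul, ← Finset.sum_mul]
    have h1 : Finset.univ.filter (fun y => y ∈ B) = B := by
      ext y; simp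
    have h2 : Finset.univ.filter (fun y => ¬ y ∈ B) = Bᶜ := by
      ext y; simp
    rw [h1, h2]
    congr 1
    have : ∑ y ∈ Bᶜ, Q y = 1 - ∑ y ∈ B, Q y := by
      have h := Finset.sum_add_sum_compl B Q
      rw [hQ1] at h
      linarith
    rw [this]
end

section
/- For integers n ≥ 1 and 0 ≤ m ≤ n, let q* = max over probability mass functions Q on {0,…,n} of min over i ∈ {0,…,n} of Q({j : |i−j| ≤ m}). Then q* = 1/⌈(n+1)/(2m+1)⌉. -/
theorem qstar_binary_types (n m : ℕ) (hn : 1 ≤ n) (hm : m ≤ n) :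
    IsGreatest {t : ℝ | ∃ Q : Fin (n + 1) → ℝ, (∀ j, 0 ≤ Q j) ∧ (∑ j, Q j = 1) ∧
      t = Finset.univ.inf' Finset.univ_nonempty (fun i : Fin (n + 1) =>
            ∑ j ∈ Finset.univ.filter
              (fun j : Fin (n + 1) => (j : ℕ) ≤ (i : ℕ) + m ∧ (i : ℕ) ≤ (j : ℕ) + m), Q j)}
      (1 / ((n + 2 * m + 1) / (2 * m + 1) : ℕ)) := by
  set b := 2 * m + 1 with hbdef
  set k := (n + 2 * m + 1) / b with hkdef
  have hb : 0 < b := by omega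
  have hdm : b * k + (n + 2 * m + 1) % b = n + 2 * m + 1 := Nat.div_add_mod _ _
  have hmod := Nat.mod_lt (n + 2 * m + 1) hb
  -- key bounds on k*b
  have hkub : b * k ≤ n + b := by omega
  have hklb : n + 1 ≤ b * k := by omega
  have hk1 : 1 ≤ k := by nlinarith
  have hkR : (0:ℝ) < (k:ℝ) := by exact_mod_cast hk1
  -- centers
  have hClt : ∀ t : ℕ, min (t * b + m) n < n + 1 := fun t => by omega
  set C : ℕ → Fin (n + 1) := fun t => ⟨min (t * b + m) n, hClt t⟩ with hCdef
  -- strict monotonicity of centers within range k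
  have hmono : ∀ t1 t2 : ℕ, t1 < t2 → t2 < k →
      min (t1 * b + m) n < min (t2 * b + m) n := by
    intro t1 t2 h12 h2k
    have h1 : (t1 + 2) * b ≤ k * b := Nat.mul_le_mul_right _ (by omega)
    have h2 : (t1 + 1) * b ≤ t2 * b := Nat.mul_le_mul_right _ (by omega)
    have e1 : (t1 + 2) * b = t1 * b + 2 * b := by ring
    have e2 : (t1 + 1) * b = t1 * b + b := by ring
    have e3 : k * b = b * k := by ring
    omega
  have hCinj : Set.InjOn C (Finset.range k : Finset ℕ) := by
    intro t1 h1 t2 h2 he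
    simp only [Finset.coe_range, Set.mem_Iio] at h1 h2
    by_contra hne
    rcases Nat.lt_or_ge t1 t2 with h | h
    · have := hmono t1 t2 h h2
      simp only [hCdef, Fin.mk.injEq] at he; omega
    · have h' : t2 < t1 := by omega
      have := hmono t2 t1 h' h1
      simp only [hCdef, Fin.mk.injEq] at he; omega
  classical
  set centers : Finset (Fin (n + 1)) := (Finset.range k).image C with hcen
  have hcard : centers.card = k := by
    rw [hcen, Finset.card_image_of_injOn hCinj, Finset.card_range]
  set Q : Fin (n + 1) → ℝ := fun j => if j ∈ centers then (1:ℝ)/k else 0 with hQdef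
  have hQ0 : ∀ j, 0 ≤ Q j := by
    intro j; simp only [hQdef]; split <;> positivity
  have hQsum : ∑ j, Q j = 1 := by
    simp only [hQdef]
    rw [Finset.sum_ite_mem, Finset.univ_inter, Finset.sum_const, hcard]
    rw [nsmul_eq_mul, mul_one_div_cancel hkR.ne']
  -- every ball contains a center
  have hball : ∀ i : Fin (n + 1), ∃ t < k, (C t : ℕ) ≤ (i : ℕ) + m ∧ (i : ℕ) ≤ (C t : ℕ) + m := by
    intro i
    refine ⟨(i : ℕ) / b, ?_, ?_, ?_⟩
    · rw [Nat.div_lt_iff_lt_mul hb]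
      have : (i : ℕ) < n + 1 := i.isLt
      have : k * b = b * k := by ring
      omega
    all_goals {
      have hd1 : (i : ℕ) / b * b ≤ (i : ℕ) := Nat.div_mul_le_self _ _
      have hd2 := Nat.div_add_mod (i : ℕ) b
      have hd3 := Nat.mod_lt (i : ℕ) hb
      have hlt : (i : ℕ) < n + 1 := i.isLt
      simp only [hCdef]
      have : b * ((i:ℕ)/b) = (i:ℕ)/b * b := by ring
      omega }
  -- lower bound on each ball mass
  have hflow : ∀ i : Fin (n + 1),
      (1:ℝ)/k ≤ ∑ j ∈ Finset.univ.filter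
        (fun j : Fin (n + 1) => (j : ℕ) ≤ (i : ℕ) + m ∧ (i : ℕ) ≤ (j : ℕ) + m), Q j := by
    intro i
    obtain ⟨t, htk, h1, h2⟩ := hball i
    have hmem : C t ∈ Finset.univ.filter
        (fun j : Fin (n + 1) => (j : ℕ) ≤ (i : ℕ) + m ∧ (i : ℕ) ≤ (j : ℕ) + m) := by
      simp [h1, h2]
    have hQC : Q (C t) = 1/(k:ℝ) := by
      simp only [hQdef, hcen]
      rw [if_pos (Finset.mem_image_of_mem C (Finset.mem_range.mpr htk))]
    calc (1:ℝ)/k = Q (C t) := hQC.symm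
      _ ≤ _ := Finset.single_le_sum (fun j _ => hQ0 j) hmem
  -- ball of 0 has mass exactly 1/k
  have hf0 : ∑ j ∈ Finset.univ.filter
      (fun j : Fin (n + 1) => (j : ℕ) ≤ ((0 : Fin (n+1)) : ℕ) + m ∧ ((0 : Fin (n+1)) : ℕ) ≤ (j : ℕ) + m), Q j
      ≤ (1:ℝ)/k := by
    have hzero : ((0 : Fin (n+1)) : ℕ) = 0 := rfl
    -- centers other than C 0 exceed m
    have hsub : (Finset.univ.filter
        (fun j : Fin (n + 1) => (j : ℕ) ≤ ((0 : Fin (n+1)) : ℕ) + m ∧ ((0 : Fin (n+1)) : ℕ) ≤ (j : ℕ) + m))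
        ∩ centers ⊆ {C 0} := by
      intro j hj
      simp only [Finset.mem_inter, Finset.mem_filter, hcen, Finset.mem_image,
        Finset.mem_range, Finset.mem_singleton] at hj ⊢
      obtain ⟨⟨_, hjm, _⟩, t, htk, hCt⟩ := hj
      rcases Nat.eq_zero_or_pos t with ht0 | htpos
      · rw [← hCt, ht0]
      · exfalso
        -- t ≥ 1 and t < k, so k ≥ 2, so b ≤ n, and C t > m
        have hk2 : 2 ≤ k := by omega
        have hbn : b ≤ n := by nlinarith
        have h1 : 1 * b ≤ t * b := Nat.mul_le_mul_right _ htpos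
        have hjval : (j : ℕ) = min (t * b + m) n := by rw [← hCt]
        omega
    have hrw : ∑ j ∈ Finset.univ.filter
        (fun j : Fin (n + 1) => (j : ℕ) ≤ ((0 : Fin (n+1)) : ℕ) + m ∧ ((0 : Fin (n+1)) : ℕ) ≤ (j : ℕ) + m), Q j
        = ∑ j ∈ (Finset.univ.filter
        (fun j : Fin (n + 1) => (j : ℕ) ≤ ((0 : Fin (n+1)) : ℕ) + m ∧ ((0 : Fin (n+1)) : ℕ) ≤ (j : ℕ) + m))
        ∩ centers, (1:ℝ)/k := by
      simp only [hQdef]; rw [Finset.sum_ite_mem]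
    rw [hrw, Finset.sum_const, nsmul_eq_mul]
    have hc : (Finset.univ.filter
        (fun j : Fin (n + 1) => (j : ℕ) ≤ ((0 : Fin (n+1)) : ℕ) + m ∧ ((0 : Fin (n+1)) : ℕ) ≤ (j : ℕ) + m)
        ∩ centers).card ≤ 1 := by
      have := Finset.card_le_card hsub
      simpa using this
    rcases Nat.le_one_iff_eq_zero_or_eq_one.mp hc with h | h <;> rw [h]
    · simp
    · simp
  constructor
  · -- membership
    refine ⟨Q, hQ0, hQsum, ?_⟩
    apply le_antisymm
    · exact Finset.le_inf' _ _ (fun i _ => by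
        simpa using hflow i)
    · exact le_trans (Finset.inf'_le _ (Finset.mem_univ (0 : Fin (n+1)))) hf0
  · -- upper bound
    rintro t ⟨Q', hQ'0, hQ'1, ht⟩
    have hIlt : ∀ s : ℕ, min (s * b) n < n + 1 := fun s => by omega
    set I : ℕ → Fin (n + 1) := fun s => ⟨min (s * b) n, hIlt s⟩ with hIdef
    have hIval : ∀ s < k, (I s : ℕ) = s * b := by
      intro s hs
      have h1 : (s + 1) * b ≤ k * b := Nat.mul_le_mul_right _ hs
      have e1 : (s + 1) * b = s * b + b := by ring
      have e3 : k * b = b * k := by ring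
      simp only [hIdef]; omega
    set f : Fin (n + 1) → ℝ := fun i => ∑ j ∈ Finset.univ.filter
        (fun j : Fin (n + 1) => (j : ℕ) ≤ (i : ℕ) + m ∧ (i : ℕ) ≤ (j : ℕ) + m), Q' j with hfdef
    have hdisj : (↑(Finset.range k) : Set ℕ).PairwiseDisjoint
        (fun s => Finset.univ.filter
          (fun j : Fin (n + 1) => (j : ℕ) ≤ (I s : ℕ) + m ∧ (I s : ℕ) ≤ (j : ℕ) + m)) := by
      intro s1 h1 s2 h2 hne
      simp only [Finset.coe_range, Set.mem_Iio] at h1 h2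
      simp only [Function.onFun]
      rw [Finset.disjoint_left]
      intro j hj1 hj2
      simp only [Finset.mem_filter] at hj1 hj2
      have e1 : s1 * b ⊓ n = s1 * b := hIval s1 h1
      have e2 : s2 * b ⊓ n = s2 * b := hIval s2 h2
      rw [hIval s1 h1] at hj1
      rw [hIval s2 h2] at hj2
      rcases Nat.lt_or_ge s1 s2 with h | h
      · have := Nat.mul_le_mul_right b (show s1 + 1 ≤ s2 by omega)
        have e : (s1 + 1) * b = s1 * b + b := by ring
        omega
      · have h' : s2 < s1 := by
          rcases Nat.lt_or_ge s2 s1 with h' | h'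
          · exact h'
          · exact absurd (Nat.le_antisymm h h') hne.symm
        have := Nat.mul_le_mul_right b (show s2 + 1 ≤ s1 by omega)
        have e : (s2 + 1) * b = s2 * b + b := by ring
        omega
    have hsumle : ∑ s ∈ Finset.range k, f (I s) ≤ 1 := by
      have heq : ∑ s ∈ Finset.range k, f (I s)
          = ∑ j ∈ (Finset.range k).biUnion (fun s => Finset.univ.filter
              (fun j : Fin (n + 1) => (j : ℕ) ≤ (I s : ℕ) + m ∧ (I s : ℕ) ≤ (j : ℕ) + m)), Q' j :=
        (Finset.sum_biUnion hdisj).symm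
      rw [heq, ← hQ'1]
      exact Finset.sum_le_sum_of_subset_of_nonneg (Finset.subset_univ _)
        (fun j _ _ => hQ'0 j)
    have htle : ∀ s ∈ Finset.range k, t ≤ f (I s) := by
      intro s _
      rw [ht]
      exact Finset.inf'_le _ (Finset.mem_univ _)
    have hks : (k : ℝ) * t ≤ 1 := by
      calc (k : ℝ) * t = ∑ _s ∈ Finset.range k, t := by
            rw [Finset.sum_const, Finset.card_range, nsmul_eq_mul]
        _ ≤ ∑ s ∈ Finset.range k, f (I s) := Finset.sum_le_sum htle
        _ ≤ 1 := hsumle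
    rw [le_div_iff₀ hkR]
    linarith
end

section
/- Let α > 1, and let Q be a strictly positive probability mass function on a finite set 𝒴 with B ⊆ 𝒴 nonempty. Among all probability mass functions P supported on B, the Rényi divergence D_α(P‖Q) = (1/(α−1)) log(Σ_{y∈B} P(y)^α Q(y)^{1−α}) is minimized by P(y) = Q(y)·1[y∈B]/Q(B), and the minimum value equals log(1/Q(B)). -/
theorem renyi_min_hard_distortion {𝒴 : Type*} [Fintype 𝒴] [DecidableEq 𝒴]
    (Q : 𝒴 → ℝ) (hQ0 : ∀ y, 0 < Q y) (hQ1 : ∑ y, Q y = 1)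
    (B : Finset 𝒴) (hB : B.Nonempty) (α : ℝ) (hα : 1 < α) :
    (∀ P : 𝒴 → ℝ, (∀ y, 0 ≤ P y) → (∑ y, P y = 1) → (∑ y ∈ B, P y = 1) →
      Real.log (1 / ∑ y ∈ B, Q y) ≤
        (1 / (α - 1)) * Real.log (∑ y ∈ B, P y ^ α * Q y ^ (1 - α))) ∧
    (1 / (α - 1)) * Real.log (∑ y ∈ B,
        ((if y ∈ B then Q y else 0) / ∑ y' ∈ B, Q y') ^ α * Q y ^ (1 - α)) =
      Real.log (1 / ∑ y ∈ B, Q y) := by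
  set S : ℝ := ∑ y ∈ B, Q y with hS
  have hSpos : 0 < S := Finset.sum_pos (fun y _ => hQ0 y) hB
  have hα1 : (0:ℝ) < α - 1 := by linarith
  constructor
  · intro P hP0 _ hPB
    set T : ℝ := ∑ y ∈ B, P y ^ α * Q y ^ (1 - α) with hT
    have key : S ^ (1 - α : ℝ) ≤ T := by
      have h := Real.rpow_arith_mean_le_arith_mean_rpow B
        (fun y => Q y / S) (fun y => P y / Q y)
        (fun y _ => div_nonneg (hQ0 y).le hSpos.le)
        (by rw [← Finset.sum_div]; field_simp; exact hS.symm)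
        (fun y _ => div_nonneg (hP0 y) (hQ0 y).le) hα.le
      have hpow : S ^ (-α : ℝ) * S = S ^ (1 - α : ℝ) := by
        nth_rewrite 2 [← Real.rpow_one S]
        rw [← Real.rpow_add hSpos]; ring_nf
      have hL : (∑ y ∈ B, Q y / S * (P y / Q y)) = 1 / S := by
        have : ∀ y ∈ B, Q y / S * (P y / Q y) = P y / S := fun y _ => by
          field_simp [(hQ0 y).ne']
        rw [Finset.sum_congr rfl this, ← Finset.sum_div, hPB]
      have hR : (∑ y ∈ B, Q y / S * (P y / Q y) ^ (α : ℝ)) = T / S := by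
        have : ∀ y ∈ B, Q y / S * (P y / Q y) ^ (α : ℝ)
            = P y ^ α * Q y ^ (1 - α) / S := fun y _ => by
          rw [Real.div_rpow (hP0 y) (hQ0 y).le, Real.rpow_sub (hQ0 y),
            Real.rpow_one]
          field_simp [(Real.rpow_pos_of_pos (hQ0 y) α).ne']
        rw [Finset.sum_congr rfl this, ← Finset.sum_div, hT]
      rw [hL, hR] at h
      have h2 : (1 / S) ^ (α:ℝ) * S ≤ T := by
        calc (1 / S) ^ (α:ℝ) * S ≤ T / S * S := by
              exact mul_le_mul_of_nonneg_right h hSpos.le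
          _ = T := by field_simp
      calc S ^ (1 - α : ℝ) = (1/S) ^ (α:ℝ) * S := by
            rw [one_div, ← Real.rpow_neg_one S, ← Real.rpow_mul hSpos.le,
              neg_one_mul]
            exact hpow.symm
        _ ≤ T := h2
    have hSp : (0:ℝ) < S ^ (1 - α : ℝ) := Real.rpow_pos_of_pos hSpos _
    have hlog : (1 - α) * Real.log S ≤ Real.log T := by
      rw [← Real.log_rpow hSpos]
      exact Real.log_le_log hSp key
    rw [Real.log_div one_ne_zero (ne_of_gt hSpos), Real.log_one]
    rw [div_mul_eq_mul_div, le_div_iff₀ hα1]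
    nlinarith
  · have heq : (∑ y ∈ B,
        ((if y ∈ B then Q y else 0) / S) ^ α * Q y ^ (1 - α)) = S ^ (1 - α : ℝ) := by
      have : ∀ y ∈ B, ((if y ∈ B then Q y else 0) / S) ^ α * Q y ^ (1 - α)
          = Q y * S ^ (-α : ℝ) := by
        intro y hy
        rw [if_pos hy, Real.div_rpow (hQ0 y).le hSpos.le,
          Real.rpow_neg hSpos.le]
        rw [div_eq_mul_inv, mul_assoc, mul_comm (S ^ α)⁻¹, ← mul_assoc,
          ← Real.rpow_add (hQ0 y), add_sub_cancel, Real.rpow_one]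
      have hpow : S ^ (-α : ℝ) * S = S ^ (1 - α : ℝ) := by
        nth_rewrite 2 [← Real.rpow_one S]
        rw [← Real.rpow_add hSpos]; ring_nf
      rw [Finset.sum_congr rfl this, ← Finset.sum_mul, ← hS, mul_comm, hpow]
    rw [heq, Real.log_rpow hSpos, Real.log_div one_ne_zero (ne_of_gt hSpos),
      Real.log_one]
    field_simp
    ring
end

section
/- Let 𝒳, 𝒴 be finite sets, B : 𝒳 → nonempty subsets of 𝒴, P_X a probability mass function on 𝒳. Then inf over kernels P_{Y|X} with P_{Y|X}(B(x)|x)=1 for all x of the mutual information I(X;Y) equals inf over probability mass functions Q on 𝒴 of Σ_x P_X(x)·log(1/Q(B(x))). -/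
lemma gibbs {α : Type*} (s : Finset α) (f g : α → ℝ)
    (hf : ∀ y ∈ s, 0 ≤ f y) (hg : ∀ y ∈ s, 0 ≤ g y)
    (hfg : ∀ y ∈ s, 0 < f y → 0 < g y) :
    ∑ y ∈ s, (f y - g y) ≤ ∑ y ∈ s, f y * Real.log (f y / g y) := by
  apply Finset.sum_le_sum
  intro y hy
  rcases (hf y hy).lt_or_eq with hfy | hfy
  · have hgy := hfg y hy hfy
    have h1 : Real.log (g y / f y) ≤ g y / f y - 1 := Real.log_le_sub_one_of_pos (by positivity)
    have h2 : f y * Real.log (g y / f y) ≤ g y - f y := by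
      calc f y * Real.log (g y / f y) ≤ f y * (g y / f y - 1) :=
            mul_le_mul_of_nonneg_left h1 hfy.le
        _ = g y - f y := by field_simp
    have h3 : Real.log (f y / g y) = - Real.log (g y / f y) := by
      rw [← Real.log_inv, inv_div]
    rw [h3]; linarith
  · rw [← hfy]
    simp only [zero_mul]
    linarith [hg y hy]

lemma key {α : Type*} (s : Finset α) (f q : α → ℝ)
    (hf : ∀ y ∈ s, 0 ≤ f y) (hq : ∀ y ∈ s, 0 < q y) (hf1 : ∑ y ∈ s, f y = 1) :
    - Real.log (∑ y ∈ s, q y) ≤ ∑ y ∈ s, f y * Real.log (f y / q y) := by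
  have hs : s.Nonempty := by
    rcases s.eq_empty_or_nonempty with h | h
    · rw [h, Finset.sum_empty] at hf1; norm_num at hf1
    · exact h
  have hQ : 0 < ∑ y ∈ s, q y := Finset.sum_pos hq hs
  set Qs := ∑ y ∈ s, q y with hQs
  have hgibbs := gibbs s f (fun y => q y / Qs) hf (fun y hy => div_nonneg (hq y hy).le hQ.le)
      (fun y hy _ => div_pos (hq y hy) hQ)
  have hsum : ∑ y ∈ s, (f y - q y / Qs) = 0 := by
    rw [Finset.sum_sub_distrib, hf1, ← Finset.sum_div, ← hQs, div_self hQ.ne']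
    ring
  have hsplit : ∀ y ∈ s, f y * Real.log (f y / (q y / Qs))
      = f y * Real.log (f y / q y) + f y * Real.log Qs := by
    intro y hy
    rcases (hf y hy).lt_or_eq with hfy | hfy
    · have hqy := hq y hy
      have heq : f y / (q y / Qs) = (f y / q y) * Qs := by field_simp
      rw [heq, Real.log_mul (by positivity) hQ.ne']
      ring
    · rw [← hfy]; simp
  rw [Finset.sum_congr rfl hsplit, Finset.sum_add_distrib, ← Finset.sum_mul, hf1, one_mul] at hgibbs
  rw [hsum] at hgibbs
  linarith

lemma lower_bound {𝒳 𝒴 : Type*} [Fintype 𝒳] [Fintype 𝒴]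
    (B : 𝒳 → Finset 𝒴) (PX : 𝒳 → ℝ) (hPX0 : ∀ x, 0 ≤ PX x)
    (W : 𝒳 → 𝒴 → ℝ) (hW0 : ∀ x y, 0 ≤ W x y) (hW1 : ∀ x, ∑ y, W x y = 1)
    (hWB : ∀ x, ∑ y ∈ B x, W x y = 1)
    (q : 𝒴 → ℝ) (hq : ∀ y, 0 < q y)
    (c : ℝ) (hc : 0 < c) (hcM : ∀ y, c * (∑ x', PX x' * W x' y) ≤ q y) :
    ∑ x, PX x * (Real.log c - Real.log (∑ y ∈ B x, q y)) ≤
      ∑ x, ∑ y, PX x * W x y * Real.log (W x y / ∑ x', PX x' * W x' y) := by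
  classical
  apply Finset.sum_le_sum
  intro x _
  have hinner : ∑ y, PX x * W x y * Real.log (W x y / ∑ x', PX x' * W x' y)
      = PX x * ∑ y, W x y * Real.log (W x y / ∑ x', PX x' * W x' y) := by
    rw [Finset.mul_sum]; exact Finset.sum_congr rfl fun y _ => by ring
  rw [hinner]
  rcases (hPX0 x).lt_or_eq with hx | hx
  swap
  · rw [← hx]; simp
  apply mul_le_mul_of_nonneg_left _ hx.le
  have hM0 : ∀ y, 0 ≤ ∑ x', PX x' * W x' y :=
    fun y => Finset.sum_nonneg fun x' _ => mul_nonneg (hPX0 x') (hW0 x' y)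
  have hMW : ∀ y, 0 < W x y → 0 < ∑ x', PX x' * W x' y := by
    intro y hWy
    have h1 : PX x * W x y ≤ ∑ x', PX x' * W x' y :=
      Finset.single_le_sum (f := fun x' => PX x' * W x' y)
        (fun x' _ => mul_nonneg (hPX0 x') (hW0 x' y)) (Finset.mem_univ x)
    nlinarith
  have hWzero : ∀ y, y ∉ B x → W x y = 0 := by
    intro y hy
    have hsd : ∑ y ∈ Finset.univ \ B x, W x y = 0 := by
      have h := Finset.sum_sdiff (f := W x) (Finset.subset_univ (B x))
      rw [hWB x, hW1 x] at h; linarith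
    exact (Finset.sum_eq_zero_iff_of_nonneg (fun y _ => hW0 x y)).1 hsd y
      (Finset.mem_sdiff.2 ⟨Finset.mem_univ y, hy⟩)
  have hrestrict : ∑ y, W x y * Real.log (W x y / ∑ x', PX x' * W x' y)
      = ∑ y ∈ B x, W x y * Real.log (W x y / ∑ x', PX x' * W x' y) := by
    symm
    apply Finset.sum_subset (Finset.subset_univ (B x))
    intro y _ hy
    rw [hWzero y hy]; ring
  rw [hrestrict]
  have hpoint : ∀ y ∈ B x, W x y * Real.log (W x y / q y) + W x y * Real.log c
      ≤ W x y * Real.log (W x y / ∑ x', PX x' * W x' y) := by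
    intro y hy
    rcases (hW0 x y).lt_or_eq with hWy | hWy
    · have hMy := hMW y hWy
      have hqy := hq y
      have hsplit : Real.log (W x y / ∑ x', PX x' * W x' y)
          = Real.log (W x y / q y) + Real.log (q y / ∑ x', PX x' * W x' y) := by
        rw [← Real.log_mul (by positivity) (by positivity)]
        congr 1
        field_simp
      have hlog : Real.log c ≤ Real.log (q y / ∑ x', PX x' * W x' y) := by
        apply Real.log_le_log hc
        rw [le_div_iff₀ hMy]
        exact hcM y
      rw [hsplit, mul_add]
      have := mul_le_mul_of_nonneg_left hlog hWy.le
      linarith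
    · rw [← hWy]; simp
  have hkey := key (B x) (W x) q (fun y _ => hW0 x y) (fun y _ => hq y) (hWB x)
  have hsum := Finset.sum_le_sum hpoint
  rw [Finset.sum_add_distrib, ← Finset.sum_mul, hWB x, one_mul] at hsum
  linarith

lemma MI_nonneg {𝒳 𝒴 : Type*} [Fintype 𝒳] [Fintype 𝒴]
    (PX : 𝒳 → ℝ) (hPX0 : ∀ x, 0 ≤ PX x) (hPX1 : ∑ x, PX x = 1)
    (W : 𝒳 → 𝒴 → ℝ) (hW0 : ∀ x y, 0 ≤ W x y) (hW1 : ∀ x, ∑ y, W x y = 1) :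
    0 ≤ ∑ x, ∑ y, PX x * W x y * Real.log (W x y / ∑ x', PX x' * W x' y) := by
  have hM0 : ∀ y, 0 ≤ ∑ x', PX x' * W x' y :=
    fun y => Finset.sum_nonneg fun x' _ => mul_nonneg (hPX0 x') (hW0 x' y)
  have hM1 : ∑ y, ∑ x', PX x' * W x' y = 1 := by
    rw [Finset.sum_comm]
    calc ∑ x', ∑ y, PX x' * W x' y = ∑ x', PX x' * ∑ y, W x' y := by
          exact Finset.sum_congr rfl fun x' _ => by rw [Finset.mul_sum]
      _ = 1 := by simp only [hW1, mul_one]; exact hPX1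
  apply Finset.sum_nonneg
  intro x _
  have hinner : ∑ y, PX x * W x y * Real.log (W x y / ∑ x', PX x' * W x' y)
      = PX x * ∑ y, W x y * Real.log (W x y / ∑ x', PX x' * W x' y) := by
    rw [Finset.mul_sum]; exact Finset.sum_congr rfl fun y _ => by ring
  rw [hinner]
  rcases (hPX0 x).lt_or_eq with hx | hx
  · apply mul_nonneg hx.le
    have hMW : ∀ y, 0 < W x y → 0 < ∑ x', PX x' * W x' y := by
      intro y hWy
      have h1 : PX x * W x y ≤ ∑ x', PX x' * W x' y :=
        Finset.single_le_sum (f := fun x' => PX x' * W x' y)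
          (fun x' _ => mul_nonneg (hPX0 x') (hW0 x' y)) (Finset.mem_univ x)
      nlinarith
    have hgibbs := gibbs Finset.univ (W x) (fun y => ∑ x', PX x' * W x' y)
      (fun y _ => hW0 x y) (fun y _ => hM0 y) (fun y _ h => hMW y h)
    rw [Finset.sum_sub_distrib, hW1 x, hM1] at hgibbs
    linarith
  · rw [← hx]; simp

lemma upper_bound {𝒳 𝒴 : Type*} [Fintype 𝒳] [Fintype 𝒴]
    (B : 𝒳 → Finset 𝒴) (hB : ∀ x, (B x).Nonempty)
    (PX : 𝒳 → ℝ) (hPX0 : ∀ x, 0 ≤ PX x) (hPX1 : ∑ x, PX x = 1)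
    (Q : 𝒴 → ℝ) (hQ : ∀ y, 0 < Q y) (hQ1 : ∑ y, Q y = 1)
    (W : 𝒳 → 𝒴 → ℝ)
    (hWeq : ∀ x y, y ∈ B x → W x y = Q y / (∑ y' ∈ B x, Q y'))
    (hWzero : ∀ x y, y ∉ B x → W x y = 0) :
    ∑ x, ∑ y, PX x * W x y * Real.log (W x y / ∑ x', PX x' * W x' y) ≤
      ∑ x, PX x * Real.log (1 / ∑ y ∈ B x, Q y) := by
  classical
  have hQB : ∀ x, 0 < ∑ y ∈ B x, Q y := fun x => Finset.sum_pos (fun y _ => hQ y) (hB x)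
  have hW0 : ∀ x y, 0 ≤ W x y := by
    intro x y
    by_cases h : y ∈ B x
    · rw [hWeq x y h]; exact div_nonneg (hQ y).le (hQB x).le
    · rw [hWzero x y h]
  have hWB : ∀ x, ∑ y ∈ B x, W x y = 1 := by
    intro x
    rw [Finset.sum_congr rfl (fun y hy => hWeq x y hy), ← Finset.sum_div,
      div_self (hQB x).ne']
  have hW1 : ∀ x, ∑ y, W x y = 1 := by
    intro x
    rw [← Finset.sum_subset (Finset.subset_univ (B x)) (fun y _ hy => hWzero x y hy)]
    exact hWB x
  have hM0 : ∀ y, 0 ≤ ∑ x', PX x' * W x' y :=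
    fun y => Finset.sum_nonneg fun x' _ => mul_nonneg (hPX0 x') (hW0 x' y)
  have hM1 : ∑ y, ∑ x', PX x' * W x' y = 1 := by
    rw [Finset.sum_comm]
    calc ∑ x', ∑ y, PX x' * W x' y = ∑ x', PX x' * ∑ y, W x' y := by
          exact Finset.sum_congr rfl fun x' _ => by rw [Finset.mul_sum]
      _ = 1 := by simp only [hW1, mul_one]; exact hPX1
  have hdecomp : ∀ x, ∀ y, PX x * W x y * Real.log (W x y / ∑ x', PX x' * W x' y)
      = PX x * W x y * Real.log (W x y / Q y)
        + (PX x * W x y) * Real.log (Q y / ∑ x', PX x' * W x' y) := by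
    intro x y
    rcases (mul_nonneg (hPX0 x) (hW0 x y)).lt_or_eq with h | h
    · have hWy : 0 < W x y := by
        rcases (hW0 x y).lt_or_eq with h' | h'
        · exact h'
        · rw [← h', mul_zero] at h; exact absurd h (lt_irrefl 0)
      have hMy : 0 < ∑ x', PX x' * W x' y :=
        lt_of_lt_of_le h (Finset.single_le_sum (f := fun x' => PX x' * W x' y)
          (fun x' _ => mul_nonneg (hPX0 x') (hW0 x' y)) (Finset.mem_univ x))
      have hQy := hQ y
      have heq : W x y / ∑ x', PX x' * W x' y
          = (W x y / Q y) * (Q y / ∑ x', PX x' * W x' y) := by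
        field_simp
      rw [heq, Real.log_mul (by positivity) (by positivity)]
      ring
    · rw [← h]; simp
  have hswap : ∑ x, ∑ y, (PX x * W x y) * Real.log (Q y / ∑ x', PX x' * W x' y)
      = ∑ y, (∑ x', PX x' * W x' y) * Real.log (Q y / ∑ x', PX x' * W x' y) := by
    rw [Finset.sum_comm]
    exact Finset.sum_congr rfl fun y _ => by rw [Finset.sum_mul]
  have hgibbs : ∑ y, (∑ x', PX x' * W x' y) * Real.log (Q y / ∑ x', PX x' * W x' y) ≤ 0 := by
    have hg := gibbs Finset.univ (fun y => ∑ x', PX x' * W x' y) Q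
      (fun y _ => hM0 y) (fun y _ => (hQ y).le) (fun y _ _ => hQ y)
    rw [Finset.sum_sub_distrib, hM1, hQ1] at hg
    have hpt : ∀ y, (∑ x', PX x' * W x' y) * Real.log (Q y / ∑ x', PX x' * W x' y)
        = -((∑ x', PX x' * W x' y) * Real.log ((∑ x', PX x' * W x' y) / Q y)) := by
      intro y
      rcases (hM0 y).lt_or_eq with h | h
      · rw [show Q y / ∑ x', PX x' * W x' y = ((∑ x', PX x' * W x' y) / Q y)⁻¹ by
          rw [inv_div], Real.log_inv]
        ring
      · rw [← h]; simp
    rw [Finset.sum_congr rfl fun y _ => hpt y, Finset.sum_neg_distrib]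
    linarith
  have hfirst : ∀ x, ∑ y, PX x * W x y * Real.log (W x y / Q y)
      = PX x * Real.log (1 / ∑ y ∈ B x, Q y) := by
    intro x
    rw [← Finset.sum_subset (Finset.subset_univ (B x))
      (fun y _ hy => by rw [hWzero x y hy]; ring)]
    have hpt : ∀ y ∈ B x, PX x * W x y * Real.log (W x y / Q y)
        = PX x * Real.log (1 / ∑ y' ∈ B x, Q y') * W x y := by
      intro y hy
      have : W x y / Q y = 1 / ∑ y' ∈ B x, Q y' := by
        rw [hWeq x y hy, div_right_comm, div_self (hQ y).ne']
      rw [this]; ring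
    rw [Finset.sum_congr rfl hpt, ← Finset.mul_sum, hWB x, mul_one]
  calc ∑ x, ∑ y, PX x * W x y * Real.log (W x y / ∑ x', PX x' * W x' y)
      = (∑ x, ∑ y, PX x * W x y * Real.log (W x y / Q y))
        + ∑ x, ∑ y, (PX x * W x y) * Real.log (Q y / ∑ x', PX x' * W x' y) := by
        rw [← Finset.sum_add_distrib]
        apply Finset.sum_congr rfl
        intro x _
        rw [← Finset.sum_add_distrib]
        exact Finset.sum_congr rfl fun y _ => hdecomp x y
    _ ≤ (∑ x, ∑ y, PX x * W x y * Real.log (W x y / Q y)) + 0 := by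
        rw [hswap] at *
        linarith
    _ = ∑ x, PX x * Real.log (1 / ∑ y ∈ B x, Q y) := by
        rw [add_zero]
        exact Finset.sum_congr rfl fun x _ => hfirst x

theorem mutual_info_hard_distortion {𝒳 𝒴 : Type*} [Fintype 𝒳] [Fintype 𝒴]
    (B : 𝒳 → Finset 𝒴) (hB : ∀ x, (B x).Nonempty)
    (PX : 𝒳 → ℝ) (hPX0 : ∀ x, 0 ≤ PX x) (hPX1 : ∑ x, PX x = 1) :
    sInf {t : ℝ | ∃ W : 𝒳 → 𝒴 → ℝ, (∀ x y, 0 ≤ W x y) ∧ (∀ x, ∑ y, W x y = 1) ∧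
        (∀ x, ∑ y ∈ B x, W x y = 1) ∧
        t = ∑ x, ∑ y, PX x * W x y *
              Real.log (W x y / ∑ x', PX x' * W x' y)} =
    sInf {t : ℝ | ∃ Q : 𝒴 → ℝ, (∀ y, 0 < Q y) ∧ (∑ y, Q y = 1) ∧
        t = ∑ x, PX x * Real.log (1 / ∑ y ∈ B x, Q y)} := by
  classical
  have h𝒳 : Nonempty 𝒳 := by
    by_contra h
    rw [not_nonempty_iff] at h
    rw [Finset.univ_eq_empty, Finset.sum_empty] at hPX1
    norm_num at hPX1
  obtain ⟨x₀⟩ := h𝒳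
  obtain ⟨y₀, hy₀⟩ := hB x₀
  have h𝒴 : Nonempty 𝒴 := ⟨y₀⟩
  have hcard : 0 < (Fintype.card 𝒴 : ℝ) := by
    exact_mod_cast Fintype.card_pos
  -- S bounded below by 0
  have hSbdd : BddBelow {t : ℝ | ∃ W : 𝒳 → 𝒴 → ℝ, (∀ x y, 0 ≤ W x y) ∧ (∀ x, ∑ y, W x y = 1) ∧
      (∀ x, ∑ y ∈ B x, W x y = 1) ∧
      t = ∑ x, ∑ y, PX x * W x y * Real.log (W x y / ∑ x', PX x' * W x' y)} := by
    refine ⟨0, ?_⟩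
    rintro s ⟨W, hW0, hW1, hWB, rfl⟩
    exact MI_nonneg PX hPX0 hPX1 W hW0 hW1
  -- T bounded below by 0
  have hTbdd : BddBelow {t : ℝ | ∃ Q : 𝒴 → ℝ, (∀ y, 0 < Q y) ∧ (∑ y, Q y = 1) ∧
      t = ∑ x, PX x * Real.log (1 / ∑ y ∈ B x, Q y)} := by
    refine ⟨0, ?_⟩
    rintro t ⟨Q, hQ, hQ1, rfl⟩
    apply Finset.sum_nonneg
    intro x _
    apply mul_nonneg (hPX0 x)
    have hQB : 0 < ∑ y ∈ B x, Q y := Finset.sum_pos (fun y _ => hQ y) (hB x)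
    have hQB1 : ∑ y ∈ B x, Q y ≤ 1 := by
      rw [← hQ1]
      exact Finset.sum_le_sum_of_subset_of_nonneg (Finset.subset_univ (B x))
        (fun y _ _ => (hQ y).le)
    rw [one_div, Real.log_inv]
    have := Real.log_nonpos hQB.le hQB1
    linarith
  -- T nonempty
  have hTne : {t : ℝ | ∃ Q : 𝒴 → ℝ, (∀ y, 0 < Q y) ∧ (∑ y, Q y = 1) ∧
      t = ∑ x, PX x * Real.log (1 / ∑ y ∈ B x, Q y)}.Nonempty := by
    refine ⟨_, fun _ => (Fintype.card 𝒴 : ℝ)⁻¹, fun y => by positivity, ?_, rfl⟩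
    rw [Finset.sum_const, Finset.card_univ, nsmul_eq_mul, mul_inv_cancel₀ hcard.ne']
  -- S nonempty
  have hSne : {t : ℝ | ∃ W : 𝒳 → 𝒴 → ℝ, (∀ x y, 0 ≤ W x y) ∧ (∀ x, ∑ y, W x y = 1) ∧
      (∀ x, ∑ y ∈ B x, W x y = 1) ∧
      t = ∑ x, ∑ y, PX x * W x y * Real.log (W x y / ∑ x', PX x' * W x' y)}.Nonempty := by
    refine ⟨_, fun x y => if y ∈ B x then ((B x).card : ℝ)⁻¹ else 0, ?_, ?_, ?_, rfl⟩
    · intro x y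
      by_cases h : y ∈ B x <;> simp [h]
    · intro x
      have hcardB : 0 < ((B x).card : ℝ) := by
        exact_mod_cast Finset.card_pos.2 (hB x)
      rw [Finset.sum_ite_mem, Finset.univ_inter, Finset.sum_const, nsmul_eq_mul,
        mul_inv_cancel₀ hcardB.ne']
    · intro x
      have hcardB : 0 < ((B x).card : ℝ) := by
        exact_mod_cast Finset.card_pos.2 (hB x)
      rw [Finset.sum_congr rfl (fun y hy => if_pos hy), Finset.sum_const, nsmul_eq_mul,
        mul_inv_cancel₀ hcardB.ne']
  apply le_antisymm
  · -- sInf S ≤ sInf T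
    apply le_csInf hTne
    rintro t ⟨Q, hQ, hQ1, rfl⟩
    set W : 𝒳 → 𝒴 → ℝ := fun x y => if y ∈ B x then Q y / (∑ y' ∈ B x, Q y') else 0 with hWdef
    have hQB : ∀ x, 0 < ∑ y ∈ B x, Q y := fun x => Finset.sum_pos (fun y _ => hQ y) (hB x)
    have hWeq : ∀ x y, y ∈ B x → W x y = Q y / (∑ y' ∈ B x, Q y') := fun x y h => if_pos h
    have hWzero : ∀ x y, y ∉ B x → W x y = 0 := fun x y h => if_neg h
    have hW0 : ∀ x y, 0 ≤ W x y := by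
      intro x y
      by_cases h : y ∈ B x
      · rw [hWeq x y h]; exact div_nonneg (hQ y).le (hQB x).le
      · rw [hWzero x y h]
    have hWB : ∀ x, ∑ y ∈ B x, W x y = 1 := by
      intro x
      rw [Finset.sum_congr rfl (fun y hy => hWeq x y hy), ← Finset.sum_div,
        div_self (hQB x).ne']
    have hW1 : ∀ x, ∑ y, W x y = 1 := by
      intro x
      rw [← Finset.sum_subset (Finset.subset_univ (B x)) (fun y _ hy => hWzero x y hy)]
      exact hWB x
    have hmem : (∑ x, ∑ y, PX x * W x y * Real.log (W x y / ∑ x', PX x' * W x' y)) ∈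
        {t : ℝ | ∃ W : 𝒳 → 𝒴 → ℝ, (∀ x y, 0 ≤ W x y) ∧ (∀ x, ∑ y, W x y = 1) ∧
        (∀ x, ∑ y ∈ B x, W x y = 1) ∧
        t = ∑ x, ∑ y, PX x * W x y * Real.log (W x y / ∑ x', PX x' * W x' y)} :=
      ⟨W, hW0, hW1, hWB, rfl⟩
    exact (csInf_le hSbdd hmem).trans
      (upper_bound B hB PX hPX0 hPX1 Q hQ hQ1 W hWeq hWzero)
  · -- sInf T ≤ sInf S
    apply le_csInf hSne
    rintro s ⟨W, hW0, hW1, hWB, rfl⟩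
    apply le_of_forall_pos_le_add
    intro δ hδ
    set c : ℝ := Real.exp (-δ) with hcdef
    have hc : 0 < c := Real.exp_pos _
    have hc1 : c < 1 := by
      rw [hcdef, ← Real.exp_zero]
      exact Real.exp_lt_exp.2 (by linarith)
    set u : ℝ := (1 - c) / (Fintype.card 𝒴 : ℝ) with hudef
    have hu : 0 < u := div_pos (by linarith) hcard
    set q : 𝒴 → ℝ := fun y => c * (∑ x', PX x' * W x' y) + u with hqdef
    have hM0 : ∀ y, 0 ≤ ∑ x', PX x' * W x' y :=
      fun y => Finset.sum_nonneg fun x' _ => mul_nonneg (hPX0 x') (hW0 x' y)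
    have hq0 : ∀ y, 0 < q y :=
      fun y => add_pos_of_nonneg_of_pos (mul_nonneg hc.le (hM0 y)) hu
    have hM1 : ∑ y, ∑ x', PX x' * W x' y = 1 := by
      rw [Finset.sum_comm]
      calc ∑ x', ∑ y, PX x' * W x' y = ∑ x', PX x' * ∑ y, W x' y := by
            exact Finset.sum_congr rfl fun x' _ => by rw [Finset.mul_sum]
        _ = 1 := by simp only [hW1, mul_one]; exact hPX1
    have hq1 : ∑ y, q y = 1 := by
      rw [hqdef]
      rw [Finset.sum_add_distrib, ← Finset.mul_sum, hM1, Finset.sum_const,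
        Finset.card_univ, nsmul_eq_mul, hudef, mul_div_cancel₀ _ hcard.ne']
      ring
    have hlb := lower_bound B PX hPX0 W hW0 hW1 hWB q hq0 c hc
      (fun y => le_add_of_nonneg_right hu.le)
    have hlogc : Real.log c = -δ := Real.log_exp _
    have hmemT : (∑ x, PX x * Real.log (1 / ∑ y ∈ B x, q y)) ∈
        {t : ℝ | ∃ Q : 𝒴 → ℝ, (∀ y, 0 < Q y) ∧ (∑ y, Q y = 1) ∧
        t = ∑ x, PX x * Real.log (1 / ∑ y ∈ B x, Q y)} := ⟨q, hq0, hq1, rfl⟩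
    refine (csInf_le hTbdd hmemT).trans ?_
    have hsplit : ∑ x, PX x * (Real.log c - Real.log (∑ y ∈ B x, q y))
        = -δ + ∑ x, PX x * Real.log (1 / ∑ y ∈ B x, q y) := by
      simp only [hlogc, one_div, Real.log_inv]
      rw [Finset.sum_congr rfl (fun x _ => show PX x * (-δ - Real.log (∑ y ∈ B x, q y))
        = PX x * (-δ) + PX x * (-Real.log (∑ y ∈ B x, q y)) by ring),
        Finset.sum_add_distrib, ← Finset.sum_mul, hPX1, one_mul]
    rw [hsplit] at hlb
    linarith
end

section
/- Let Q be a strictly positive probability mass function on a finite set 𝒴, and for each x in a finite set 𝒳 let B(x) ⊆ 𝒴 be nonempty. Define the kernel P*_{Y|X}(y|x) = Q(y)·1[y∈B(x)]/Q(B(x)). Then for any probability mass function P_X on 𝒳 and any convex f with f(1)=0, Σ_x P_X(x) D_f(P*_{Y|X=x}‖Q) = f(0) + Σ_x P_X(x)·Q(B(x))·(f(1/Q(B(x))) − f(0)). -/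
theorem optimal_mechanism_fdiv_value {𝒳 𝒴 : Type*} [Fintype 𝒳] [Fintype 𝒴] [DecidableEq 𝒴]
    (Q : 𝒴 → ℝ) (hQ0 : ∀ y, 0 < Q y) (hQ1 : ∑ y, Q y = 1)
    (B : 𝒳 → Finset 𝒴) (hB : ∀ x, (B x).Nonempty)
    (PX : 𝒳 → ℝ) (hPX0 : ∀ x, 0 ≤ PX x) (hPX1 : ∑ x, PX x = 1)
    (f : ℝ → ℝ) (hf : ConvexOn ℝ (Set.Ici 0) f) (hf1 : f 1 = 0) :
    ∑ x, PX x * ∑ y, Q y *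
        f (((if y ∈ B x then Q y else 0) / ∑ y' ∈ B x, Q y') / Q y) =
      f 0 + ∑ x, PX x * ((∑ y ∈ B x, Q y) *
        (f (1 / ∑ y ∈ B x, Q y) - f 0)) := by
  have key : ∀ x, ∑ y, Q y *
      f (((if y ∈ B x then Q y else 0) / ∑ y' ∈ B x, Q y') / Q y) =
      f 0 + (∑ y ∈ B x, Q y) * (f (1 / ∑ y ∈ B x, Q y) - f 0) := by
    intro x
    set S := ∑ y ∈ B x, Q y with hS
    have hSpos : 0 < S := Finset.sum_pos (fun y _ => hQ0 y) (hB x)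
    rw [← Finset.sum_add_sum_compl (B x)]
    have h1 : ∑ y ∈ B x, Q y * f ((if y ∈ B x then Q y else 0) / S / Q y)
        = S * f (1 / S) := by
      have : ∑ y ∈ B x, Q y * f ((if y ∈ B x then Q y else 0) / S / Q y)
          = ∑ y ∈ B x, Q y * f (1 / S) := by
        apply Finset.sum_congr rfl
        intro y hy
        rw [if_pos hy]
        congr 2
        field_simp
        exact div_self (hQ0 y).ne'
      rw [this, ← Finset.sum_mul]
    have h2 : ∑ y ∈ (B x)ᶜ, Q y * f ((if y ∈ B x then Q y else 0) / S / Q y)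
        = (1 - S) * f 0 := by
      have : ∑ y ∈ (B x)ᶜ, Q y * f ((if y ∈ B x then Q y else 0) / S / Q y)
          = ∑ y ∈ (B x)ᶜ, Q y * f 0 := by
        apply Finset.sum_congr rfl
        intro y hy
        rw [if_neg (Finset.mem_compl.mp hy)]
        norm_num
      rw [this, ← Finset.sum_mul]
      congr 1
      have := Finset.sum_add_sum_compl (B x) Q
      linarith [hQ1]
    rw [h1, h2]; ring
  simp only [key, mul_add]
  rw [Finset.sum_add_distrib, ← Finset.sum_mul, hPX1, one_mul]
end

section
/- For integers n ≥ 1, 0 ≤ m ≤ n, with K = ⌈(n+1)/(2m+1)⌉, let l = m if m + (K−1)(2m+1) ≤ n, and l = n − (K−1)(2m+1) otherwise. Then 0 ≤ l, l + (K−1)(2m+1) ≤ n, and for every j ∈ {0,…,n} there exists a unique k ∈ {0,…,K−1} with |j − (l + (2m+1)k)| ≤ m. -/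
theorem optimal_index_construction (n m : ℕ) (hn : 1 ≤ n) (hm : m ≤ n) :
    let K : ℕ := (n + 2 * m + 1) / (2 * m + 1)
    let l : ℤ := if m + (K - 1) * (2 * m + 1) ≤ n then (m : ℤ)
                 else (n : ℤ) - (K - 1 : ℕ) * (2 * m + 1)
    0 ≤ l ∧ l + (K - 1 : ℕ) * (2 * m + 1) ≤ (n : ℤ) ∧
    ∀ j : ℤ, 0 ≤ j → j ≤ (n : ℤ) →
      ∃! k : ℕ, k < K ∧ |j - (l + (2 * m + 1) * k)| ≤ (m : ℤ) := by
  intro K l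
  have hd : 0 < 2 * m + 1 := by omega
  have hK : K = n / (2 * m + 1) + 1 := by
    show (n + 2 * m + 1) / (2 * m + 1) = _
    rw [show n + 2 * m + 1 = n + (2 * m + 1) by ring, Nat.add_div_right _ hd]
  obtain ⟨q, r, hnqr, hrlt, hKq⟩ : ∃ q r : ℕ,
      (2 * m + 1) * q + r = n ∧ r < 2 * m + 1 ∧ K = q + 1 :=
    ⟨n / (2 * m + 1), n % (2 * m + 1), Nat.div_add_mod n (2 * m + 1),
      Nat.mod_lt _ hd, hK⟩
  clear hK
  have hK1 : K - 1 = q := by rw [hKq]; rfl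
  have hdz : (0 : ℤ) < 2 * (m : ℤ) + 1 := by positivity
  have hl : l = if m + q * (2 * m + 1) ≤ n then (m : ℤ) else (n : ℤ) - q * (2 * m + 1) := by
    simp only [l, hK1]
  clear_value l K
  have hnz : (n : ℤ) = (2 * (m : ℤ) + 1) * q + r := by exact_mod_cast hnqr.symm
  have hrz : (r : ℤ) < 2 * (m : ℤ) + 1 := by exact_mod_cast hrlt
  have hr0 : (0 : ℤ) ≤ (r : ℤ) := by positivity
  have h1 : 0 ≤ l := by
    rw [hl]; split_ifs with hc
    · positivity
    · push_cast
      linarith [hnz]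
  have h2z : l + (q : ℤ) * (2 * (m : ℤ) + 1) ≤ (n : ℤ) := by
    rw [hl]; split_ifs with hc
    · exact_mod_cast hc
    · push_cast; linarith
  have h4 : l ≤ (m : ℤ) := by
    rw [hl]; split_ifs with hc
    · exact le_rfl
    · push_cast
      have hcc : ¬ ((m : ℤ) + q * (2 * m + 1) ≤ n) := by exact_mod_cast hc
      push_neg at hcc; linarith
  have h3 : (n : ℤ) ≤ l + (q : ℤ) * (2 * (m : ℤ) + 1) + m := by
    rw [hl]; split_ifs with hc
    · push_cast; nlinarith
    · push_cast; linarith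
  refine ⟨h1, ?_, ?_⟩
  · rw [hK1]; push_cast; linarith [h2z]
  intro j hj0 hjn
  have ha0 : 0 ≤ j - l + m := by linarith
  obtain ⟨kz, s, heq, hs0, hslt, hkz0⟩ : ∃ kz s : ℤ,
      (2 * (m : ℤ) + 1) * kz + s = j - l + m ∧ 0 ≤ s ∧ s < 2 * (m : ℤ) + 1 ∧ 0 ≤ kz :=
    ⟨(j - l + m) / (2 * (m : ℤ) + 1), (j - l + m) % (2 * (m : ℤ) + 1),
      Int.mul_ediv_add_emod _ _, Int.emod_nonneg _ (ne_of_gt hdz),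
      Int.emod_lt_of_pos _ hdz, Int.ediv_nonneg ha0 (le_of_lt hdz)⟩
  have hcast : ((kz.toNat : ℕ) : ℤ) = kz := Int.toNat_of_nonneg hkz0
  refine ⟨kz.toNat, ⟨?_, ?_⟩, ?_⟩
  · -- kz.toNat < K
    rw [hKq]
    by_contra hk
    push_neg at hk
    have h5 : (q : ℤ) + 1 ≤ kz := by
      have hc2 : ((q + 1 : ℕ) : ℤ) ≤ (kz.toNat : ℤ) := by exact_mod_cast hk
      push_cast at hc2
      omega
    have h6 : (2 * (m : ℤ) + 1) * ((q : ℤ) + 1) ≤ (2 * (m : ℤ) + 1) * kz :=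
      mul_le_mul_of_nonneg_left h5 (le_of_lt hdz)
    nlinarith [heq, hs0, h3, hjn]
  · -- abs bound
    rw [hcast, abs_le]
    constructor <;> linarith [heq, hs0, hslt]
  · -- uniqueness
    rintro k' ⟨hk'K, hk'abs⟩
    rw [abs_le] at hk'abs
    obtain ⟨hA, hB⟩ := hk'abs
    have : (k' : ℤ) = kz := by
      rcases lt_trichotomy ((k' : ℕ) : ℤ) kz with h | h | h
      · exfalso
        have h5 : (k' : ℤ) + 1 ≤ kz := h
        have h6 : (2 * (m : ℤ) + 1) * ((k' : ℤ) + 1) ≤ (2 * (m : ℤ) + 1) * kz :=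
          mul_le_mul_of_nonneg_left h5 (le_of_lt hdz)
        linarith [heq, hs0, hslt]
      · exact h
      · exfalso
        have h5 : kz + 1 ≤ (k' : ℤ) := h
        have h6 : (2 * (m : ℤ) + 1) * (kz + 1) ≤ (2 * (m : ℤ) + 1) * (k' : ℤ) :=
          mul_le_mul_of_nonneg_left h5 (le_of_lt hdz)
        linarith [heq, hs0, hslt]
    omega
end
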